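/- arXiv:1904.04897 — 8 statements merged into one kernel-verified Lean document; each statement's English description precedes it below -/
import Mathlib

section
/- If η : ℤ² → A is periodic of period h ∈ ℤ² \ {0}, then every one-dimensional subspace F ⊂ ℝ² that does not contain h (viewed in ℝ²) is expansive on X_η. That is, there exists t > 0 such that for all x, y ∈ X_η, if x and y agree on F^t := {g ∈ ℤ² : dist(g, F) ≤ t}, then x = y. -/
/-!
Every configuration in the orbit closure of `η` is again `h`-periodic, so it suffices to see
that every lattice point can be moved by a multiple of `h` into a fixed neighbourhood of `F`.
Since `F` is a line missing `h`, `ℝ² = F ⊕ ℝh`; writing `g = f + r h` and subtracting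
`(round r) h` lands within `‖h‖ / 2` of `F`.
-/

open Function Metric Submodule

def emb (g : ℤ × ℤ) : ℝ × ℝ := ((g.1 : ℝ), (g.2 : ℝ))

lemma emb_sub_zsmul (g h : ℤ × ℤ) (n : ℤ) : emb (g - n • h) = emb g - n • emb h := by
  ext <;> simp [emb]

lemma isClosed_setOf_periodic {G A : Type*} [Add G] [TopologicalSpace A] [T2Space A] (c : G) :
    IsClosed {z : G → A | Periodic z c} := by
  simp only [Periodic, Set.ofPred_forall]
  exact isClosed_iInter fun g => isClosed_eq (continuous_apply _) (continuous_apply _)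

lemma Function.Periodic.of_mem_closure_translates {G A : Type*} [AddCommSemigroup G]
    [TopologicalSpace A] [T2Space A] {η : G → A} {c : G} (hη : Periodic η c) {x : G → A}
    (hx : x ∈ closure {y : G → A | ∃ u : G, y = fun g => η (g + u)}) : Periodic x c := by
  refine closure_minimal ?_ (isClosed_setOf_periodic c) hx
  rintro _ ⟨u, rfl⟩ g
  simp only [add_right_comm g c u, hη (g + u)]

lemma sup_span_singleton_eq_top_of_finrank_eq_one {F : Submodule ℝ (ℝ × ℝ)}
    (hF : Module.finrank ℝ F = 1) {v : ℝ × ℝ} (hv : v ∉ F) : F ⊔ ℝ ∙ v = ⊤ := by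
  apply eq_top_of_finrank_eq
  rw [finrank_sup_span_singleton hv, hF, Module.finrank_prod, Module.finrank_self]

lemma exists_infDist_sub_zsmul_le {E : Type*} [NormedAddCommGroup E] [NormedSpace ℝ E]
    {F : Submodule ℝ E} {v : E} (hFv : F ⊔ ℝ ∙ v = ⊤) (x : E) :
    ∃ n : ℤ, infDist (x - n • v) F ≤ ‖v‖ / 2 := by
  obtain ⟨f, hf, _, hw, hx⟩ := mem_sup.mp (hFv ▸ mem_top : x ∈ F ⊔ ℝ ∙ v)
  obtain ⟨r, rfl⟩ := mem_span_singleton.mp hw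
  refine ⟨round r, (infDist_le_dist_of_mem hf).trans ?_⟩
  have hdiff : x - round r • v - f = (r - round r) • v := by
    rw [← hx, sub_smul, ← Int.cast_smul_eq_zsmul ℝ]
    abel
  calc dist (x - round r • v) f = |r - round r| * ‖v‖ := by
        rw [dist_eq_norm, hdiff, norm_smul, Real.norm_eq_abs]
    _ ≤ 1 / 2 * ‖v‖ := by gcongr; exact abs_sub_round r
    _ = ‖v‖ / 2 := by ring

theorem expansive_of_periodic_general
    {A : Type*} [TopologicalSpace A] [DiscreteTopology A]
    (η : ℤ × ℤ → A) (h : ℤ × ℤ) (hper : ∀ g : ℤ × ℤ, η (g + h) = η g)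
    (F : Submodule ℝ (ℝ × ℝ)) (hF : Module.finrank ℝ F = 1)
    (hhF : emb h ∉ F) :
    ∃ t : ℝ, 0 < t ∧
      ∀ x ∈ closure {y : ℤ × ℤ → A | ∃ u : ℤ × ℤ, y = fun g => η (g + u)},
      ∀ y ∈ closure {y : ℤ × ℤ → A | ∃ u : ℤ × ℤ, y = fun g => η (g + u)},
        (∀ g : ℤ × ℤ, Metric.infDist (emb g) (F : Set (ℝ × ℝ)) ≤ t → x g = y g) →
        x = y := by
  have hh : emb h ≠ 0 := fun h0 => hhF (h0 ▸ F.zero_mem)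
  have hsup := sup_span_singleton_eq_top_of_finrank_eq_one hF hhF
  refine ⟨‖emb h‖ / 2, by positivity, fun x hx y hy hxy => funext fun g => ?_⟩
  obtain ⟨n, hn⟩ := exists_infDist_sub_zsmul_le hsup (emb g)
  have hxper := Periodic.of_mem_closure_translates (c := h) hper hx
  have hyper := Periodic.of_mem_closure_translates (c := h) hper hy
  rw [← hxper.sub_zsmul_eq n, ← hyper.sub_zsmul_eq n]
  exact hxy _ (by rwa [emb_sub_zsmul])

/-- If `η` is periodic of period `h ≠ 0`, then every one-dimensional subspace of `ℝ²`
not containing `h` is expansive on the orbit closure `X_η`. -/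
theorem expansive_of_periodic
    {A : Type*} [Fintype A] [TopologicalSpace A] [DiscreteTopology A]
    (η : ℤ × ℤ → A) (h : ℤ × ℤ) (hh : h ≠ 0) (hper : ∀ g : ℤ × ℤ, η (g + h) = η g)
    (F : Submodule ℝ (ℝ × ℝ)) (hF : Module.finrank ℝ F = 1)
    (hhF : emb h ∉ F) :
    ∃ t : ℝ, 0 < t ∧
      ∀ x ∈ closure {y : ℤ × ℤ → A | ∃ u : ℤ × ℤ, y = fun g => η (g + u)},
      ∀ y ∈ closure {y : ℤ × ℤ → A | ∃ u : ℤ × ℤ, y = fun g => η (g + u)},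
        (∀ g : ℤ × ℤ, Metric.infDist (emb g) (F : Set (ℝ × ℝ)) ≤ t → x g = y g) →
        x = y :=
  expansive_of_periodic_general η h hper F hF hhF
end

section
/- Let η : ℤ² → A be a configuration whose range is all of A (|A| ≥ 2), and let S ⊂ ℤ² be a nonempty finite convex set whose convex hull in ℝ² has zero area (i.e., all points of S lie on a single line). If P_η(S) ≤ |S| + |A| - 2, then η is periodic. -/
/-- The number of distinct `S`-patterns of a configuration `η : ℤ² → A`. -/
noncomputable def patternCount {A : Type*} (η : ℤ × ℤ → A) (S : Finset (ℤ × ℤ)) : ℕ :=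
  Set.ncard {w : (↥S) → A | ∃ u : ℤ × ℤ, ∀ s : ↥S, w s = η (u + (s : ℤ × ℤ))}

/-- A finite subset of `ℤ²` is (lattice) convex if it contains every lattice point of its
real convex hull. -/
def IsLatticeConvex (S : Finset (ℤ × ℤ)) : Prop :=
  ∀ g : ℤ × ℤ, emb g ∈ convexHull ℝ (emb '' (S : Set (ℤ × ℤ))) → g ∈ S


/-!
Collinearity and lattice convexity make `S` an arithmetic progression `a, a + v, …, a + (n-1)v`
with `v ≠ 0`, so the `S`-patterns of `η` are the words of length `n = |S|` read along the lines of
direction `v`. There are `|A|` words of length one, so the bound `P_η(S) ≤ n + |A| - 2` forces the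
number of words to stop growing at some length `m ≥ 1`. Then, as in Morse–Hedlund, each `m`-word
has a unique extension on either side: the `m`-word at `u ± v` is determined by the one at `u`.
Finitely many `m`-words make every line periodic, with a period that does not depend on the line.
-/

open Finset Function Nat

/-- Pigeonhole on `s 0, …, s |β|` gives a period `d ≤ |β|`, and `|β|!` is a multiple of every such
`d`: this makes the period independent of `s`. -/
theorem Function.periodic_factorial_natCard_of_step_determined {β : Type*} [Finite β] {s : ℤ → β}
    (hsucc : ∀ i j, s i = s j → s (i + 1) = s (j + 1))
    (hpred : ∀ i j, s i = s j → s (i - 1) = s (j - 1)) :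
    Periodic s (Nat.card β)! := by
  have := Fintype.ofFinite β
  rw [Nat.card_eq_fintype_card]
  have hshift : ∀ i j, s i = s j → ∀ t, s (i + t) = s (j + t) := by
    intro i j hij t
    induction t using Int.induction_on with
    | zero => simpa using hij
    | succ t ih => simpa only [← add_assoc] using hsucc _ _ ih
    | pred t ih => simpa only [add_sub_assoc'] using hpred _ _ ih
  obtain ⟨k, l, hkl, hs⟩ := Fintype.exists_ne_map_eq_of_card_lt
    (fun k : Fin (Fintype.card β + 1) => s k) (by simp)
  wlog hlt : k < l generalizing k l
  · exact this l k hkl.symm hs.symm (lt_of_le_of_ne (not_lt.mp hlt) hkl.symm)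
  have hper : Periodic s ((l - k : ℕ) : ℤ) := fun x => by
    have := hshift _ _ hs (x - k)
    rw [Nat.cast_sub hlt.le]
    convert this.symm using 2 <;> ring
  obtain ⟨c, hc⟩ := Nat.dvd_factorial (n := Fintype.card β) (Nat.sub_pos_of_lt hlt)
    (by have := l.isLt; omega)
  rw [hc, Nat.cast_mul, mul_comm]
  exact hper.nat_mul c

section LineWords

variable {G A : Type*} [AddCommGroup G]

def lineWord (η : G → A) (v : G) (m : ℕ) (u : G) : Fin m → A :=
  fun k => η (u + (k : ℕ) • v)

/-- For `S = {a + k • v | k < m}` this is `P_η(S)`. -/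
noncomputable def lineComplexity (η : G → A) (v : G) (m : ℕ) : ℕ :=
  (Set.range (lineWord η v m)).ncard

variable {η : G → A} {v : G} {m : ℕ}

theorem lineWord_comp_castSucc (u : G) :
    lineWord η v (m + 1) u ∘ Fin.castSucc = lineWord η v m u :=
  rfl

theorem lineWord_comp_succ (u : G) :
    lineWord η v (m + 1) u ∘ Fin.succ = lineWord η v m (u + v) := by
  funext k
  simp only [lineWord, comp_apply, Fin.val_succ, succ_nsmul', add_assoc]

theorem image_comp_castSucc_range_lineWord :
    (· ∘ Fin.castSucc) '' Set.range (lineWord η v (m + 1)) = Set.range (lineWord η v m) := by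
  rw [← Set.range_comp]
  exact congrArg Set.range (funext lineWord_comp_castSucc)

theorem image_comp_succ_range_lineWord :
    (· ∘ Fin.succ) '' Set.range (lineWord η v (m + 1)) = Set.range (lineWord η v m) := by
  rw [← Set.range_comp]
  exact (congrArg Set.range (funext lineWord_comp_succ)).trans
    ((Equiv.addRight v).surjective.range_comp (lineWord η v m))

theorem lineComplexity_one (hη : Surjective η) : lineComplexity η v 1 = Nat.card A := by
  have : Set.range (lineWord η v 1) = Set.univ := by
    refine Set.eq_univ_of_forall fun w => ?_
    obtain ⟨u, hu⟩ := hη (w 0)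
    exact ⟨u, funext fun k => by simp [lineWord, Fin.fin_one_eq_zero k, hu]⟩
  rw [lineComplexity, this, Set.ncard_univ, Nat.card_fun]
  simp

variable [Finite A]

theorem exists_lineComplexity_succ_le (hη : Surjective η) {n : ℕ} (hn : 0 < n)
    (h : lineComplexity η v n ≤ n + Nat.card A - 2) :
    ∃ m, 0 < m ∧ lineComplexity η v (m + 1) ≤ lineComplexity η v m := by
  by_contra! hlt
  have hA : 0 < Nat.card A := Nat.card_pos_iff.mpr ⟨⟨η 0⟩, inferInstance⟩
  have hgrow : ∀ j, Nat.card A + j ≤ lineComplexity η v (j + 1) := by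
    intro j
    induction j with
    | zero => simp [lineComplexity_one hη]
    | succ j ih => linarith [hlt (j + 1) j.succ_pos]
  have := hgrow (n - 1)
  rw [Nat.sub_add_cancel hn] at this
  omega

variable (hle : lineComplexity η v (m + 1) ≤ lineComplexity η v m)
include hle

theorem injOn_comp_of_lineComplexity_le {r : Fin m → Fin (m + 1)}
    (hr : (· ∘ r) '' Set.range (lineWord η v (m + 1)) = Set.range (lineWord η v m)) :
    Set.InjOn (· ∘ r) (Set.range (lineWord η v (m + 1))) :=
  Set.injOn_of_ncard_image_eq <|
    le_antisymm (Set.ncard_image_le (Set.toFinite _)) (hr ▸ hle)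

theorem lineWord_add_eq_of_eq {u u' : G} (h : lineWord η v m u = lineWord η v m u') :
    lineWord η v m (u + v) = lineWord η v m (u' + v) := by
  have := injOn_comp_of_lineComplexity_le hle image_comp_castSucc_range_lineWord
    ⟨u, rfl⟩ ⟨u', rfl⟩ h
  simpa only [lineWord_comp_succ] using congrArg (· ∘ Fin.succ) this

theorem lineWord_sub_eq_of_eq {u u' : G} (h : lineWord η v m u = lineWord η v m u') :
    lineWord η v m (u - v) = lineWord η v m (u' - v) := by
  have := injOn_comp_of_lineComplexity_le hle image_comp_succ_range_lineWord
    ⟨u - v, rfl⟩ ⟨u' - v, rfl⟩ (by simpa only [comp_apply, lineWord_comp_succ, sub_add_cancel])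
  simpa only [lineWord_comp_castSucc] using congrArg (· ∘ Fin.castSucc) this

theorem exists_periodic_of_lineComplexity_succ_le (hm : 0 < m) :
    ∃ N : ℕ, 0 < N ∧ ∀ u, η (u + N • v) = η u := by
  refine ⟨(Nat.card (Fin m → A))!, factorial_pos _, fun u => ?_⟩
  have hper : Periodic (fun t : ℤ => lineWord η v m (u + t • v)) (Nat.card (Fin m → A))! :=
    periodic_factorial_natCard_of_step_determined
      (fun i j h => by
        simp only [add_zsmul, one_zsmul, ← add_assoc]
        exact lineWord_add_eq_of_eq hle h)
      (fun i j h => by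
        simp only [sub_zsmul, one_zsmul, ← sub_eq_add_neg, ← add_sub_assoc]
        exact lineWord_sub_eq_of_eq hle h)
  simpa [lineWord] using congrFun (hper 0) ⟨0, hm⟩

end LineWords

theorem emb_add_zsmul (a v : ℤ × ℤ) (t : ℤ) : emb (a + t • v) = emb a + (t : ℝ) • emb v := by
  ext <;> simp [emb]

theorem IsLatticeConvex.add_zsmul_mem {S : Finset (ℤ × ℤ)} (hS : IsLatticeConvex S)
    {a v : ℤ × ℤ} {i j t : ℤ} (hi : a + i • v ∈ S) (hj : a + j • v ∈ S) (hit : i ≤ t)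
    (htj : t ≤ j) : a + t • v ∈ S := by
  refine hS _ <| segment_subset_convexHull (Set.mem_image_of_mem emb hi)
    (Set.mem_image_of_mem emb hj) ?_
  let f : ℝ →ᵃ[ℝ] ℝ × ℝ := AffineMap.lineMap (emb a) (emb a + emb v)
  have hf : ∀ r : ℤ, f r = emb (a + r • v) := fun r => by
    rw [emb_add_zsmul, AffineMap.lineMap_apply_module', add_sub_cancel_left, add_comm]
  rw [← hf, ← hf, ← hf, ← image_segment, segment_eq_Icc (by exact_mod_cast hit.trans htj)]
  exact ⟨t, ⟨by exact_mod_cast hit, by exact_mod_cast htj⟩, rfl⟩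

theorem exists_zsmul_eq_of_mul_eq_mul {v w : ℤ × ℤ} (hv : IsCoprime v.1 v.2)
    (h : w.1 * v.2 = w.2 * v.1) : ∃ t : ℤ, w = t • v := by
  obtain ⟨x, y, hxy⟩ := hv
  refine ⟨x * w.1 + y * w.2, Prod.ext ?_ ?_⟩
  · simp only [Prod.smul_fst, smul_eq_mul]; linear_combination (-w.1) * hxy + y * h
  · simp only [Prod.smul_snd, smul_eq_mul]; linear_combination (-w.2) * hxy - x * h

theorem exists_isCoprime_zsmul_eq {d : ℤ × ℤ} (hd : d ≠ 0) :
    ∃ g : ℤ, ∃ v : ℤ × ℤ, g ≠ 0 ∧ IsCoprime v.1 v.2 ∧ d = g • v := by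
  have hpos : 0 < Int.gcd d.1 d.2 := Int.gcd_pos_iff.mpr <| by
    by_contra! h; exact hd (Prod.ext h.1 h.2)
  obtain ⟨g, v₁, v₂, hg, hcop, h₁, h₂⟩ := Int.exists_gcd_one' hpos
  refine ⟨g, (v₁, v₂), by positivity, Int.isCoprime_iff_gcd_eq_one.mpr hcop, Prod.ext ?_ ?_⟩
  · simp [h₁, mul_comm]
  · simp [h₂, mul_comm]

theorem mul_eq_mul_of_collinear {S : Set (ℤ × ℤ)} (hS : Collinear ℝ (emb '' S)) {p q s : ℤ × ℤ}
    (hp : p ∈ S) (hq : q ∈ S) (hs : s ∈ S) :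
    (s - p).1 * (q - p).2 = (s - p).2 * (q - p).1 := by
  obtain ⟨w, hw⟩ := (collinear_iff_of_mem (Set.mem_image_of_mem emb hp)).mp hS
  obtain ⟨r, hr⟩ := hw _ (Set.mem_image_of_mem emb hs)
  obtain ⟨r', hr'⟩ := hw _ (Set.mem_image_of_mem emb hq)
  simp only [emb, Prod.ext_iff, Prod.smul_fst, Prod.smul_snd, smul_eq_mul, vadd_eq_add,
    Prod.fst_add, Prod.snd_add] at hr hr'
  have : ((s.1 - p.1) * (q.2 - p.2) : ℝ) = (s.2 - p.2) * (q.1 - p.1) := by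
    rw [hr.1, hr.2, hr'.1, hr'.2]; ring
  simp only [Prod.fst_sub, Prod.snd_sub]
  exact_mod_cast this

theorem exists_forall_mem_eq_add_zsmul {S : Set (ℤ × ℤ)} (hS : Collinear ℝ (emb '' S))
    {p : ℤ × ℤ} (hp : p ∈ S) : ∃ v : ℤ × ℤ, v ≠ 0 ∧ ∀ s ∈ S, ∃ t : ℤ, s = p + t • v := by
  by_cases h : ∀ q ∈ S, q = p
  · exact ⟨(1, 0), by simp, fun s hs => ⟨0, by simp [h s hs]⟩⟩
  obtain ⟨q, hq, hqp⟩ := not_forall₂.mp h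
  obtain ⟨g, v, hg, hv, hqpv⟩ := exists_isCoprime_zsmul_eq (sub_ne_zero.mpr hqp)
  refine ⟨v, by rintro rfl; exact hqp (sub_eq_zero.mp (by simpa using hqpv)), fun s hs => ?_⟩
  have hcross := mul_eq_mul_of_collinear hS hp hq hs
  rw [hqpv, Prod.smul_fst, Prod.smul_snd, smul_eq_mul, smul_eq_mul] at hcross
  obtain ⟨t, ht⟩ := exists_zsmul_eq_of_mul_eq_mul (w := s - p) hv
    (mul_left_cancel₀ hg (by linear_combination hcross))
  exact ⟨t, by rw [← ht, add_sub_cancel]⟩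

theorem IsLatticeConvex.exists_eq_image_range {S : Finset (ℤ × ℤ)} (hconv : IsLatticeConvex S)
    (hcoll : Collinear ℝ (emb '' (S : Set (ℤ × ℤ)))) (hne : S.Nonempty) :
    ∃ (a v : ℤ × ℤ) (n : ℕ), v ≠ 0 ∧ S = (range n).image fun k : ℕ => a + k • v := by
  obtain ⟨p, hp⟩ := hne
  obtain ⟨v, hv, hline⟩ := exists_forall_mem_eq_add_zsmul hcoll hp
  have hinj : Injective fun t : ℤ => p + t • v :=
    (add_right_injective p).comp (smul_left_injective ℤ hv)
  set T := S.preimage (fun t : ℤ => p + t • v) hinj.injOn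
  have hT_mem (t : ℤ) : t ∈ T ↔ p + t • v ∈ S := mem_preimage
  have hT : T.Nonempty := ⟨0, (hT_mem 0).mpr (by simpa using hp)⟩
  refine ⟨p + T.min' hT • v, v, (T.max' hT - T.min' hT).toNat + 1, hv, ?_⟩
  ext s
  simp only [mem_image, mem_range]
  constructor
  · intro hs
    obtain ⟨t, rfl⟩ := hline s hs
    have ht : t ∈ T := (hT_mem t).mpr hs
    have h₁ := T.min'_le t ht
    have h₂ := T.le_max' t ht
    refine ⟨(t - T.min' hT).toNat, by omega, ?_⟩
    rw [← natCast_zsmul, Int.toNat_of_nonneg (by omega), add_assoc, ← add_zsmul,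
      add_sub_cancel]
  · rintro ⟨k, hk, rfl⟩
    have hmin : p + T.min' hT • v ∈ S := (hT_mem _).mp (T.min'_mem hT)
    have hmax : p + T.max' hT • v ∈ S := (hT_mem _).mp (T.max'_mem hT)
    have hle := T.min'_le _ (T.max'_mem hT)
    rw [← natCast_zsmul, add_assoc, ← add_zsmul]
    exact hconv.add_zsmul_mem hmin hmax (by omega) (by omega)

theorem patternCount_image_range_add_nsmul {A : Type*} (η : ℤ × ℤ → A) (a v : ℤ × ℤ) (n : ℕ) :
    patternCount η ((range n).image fun k : ℕ => a + k • v) = lineComplexity η v n := by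
  set S := (range n).image fun k : ℕ => a + k • v
  have hmem (k : Fin n) : a + (k : ℕ) • v ∈ S := mem_image_of_mem _ (mem_range.mpr k.isLt)
  let restrict : (S → A) → Fin n → A := fun w k => w ⟨_, hmem k⟩
  have hinj : Injective restrict := fun w w' h => funext fun s => by
    obtain ⟨k, hk, hs⟩ := mem_image.mp s.2
    rw [show s = ⟨_, hmem ⟨k, mem_range.mp hk⟩⟩ from Subtype.ext hs.symm]
    exact congrFun h _
  have himage : restrict '' {w | ∃ u, ∀ s : S, w s = η (u + s)} = Set.range (lineWord η v n) := by
    ext w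
    constructor
    · rintro ⟨w, ⟨u, hu⟩, rfl⟩
      exact ⟨u + a, funext fun k => by simp [restrict, lineWord, hu, add_assoc]⟩
    · rintro ⟨u, rfl⟩
      refine ⟨_, ⟨u - a, fun s => rfl⟩, funext fun k => ?_⟩
      simp only [restrict, lineWord, ← add_assoc, sub_add_cancel]
  rw [patternCount, lineComplexity, ← himage, Set.ncard_image_of_injective _ hinj]

theorem card_image_range_add_nsmul {a v : ℤ × ℤ} (hv : v ≠ 0) (n : ℕ) :
    ((range n).image fun k : ℕ => a + k • v).card = n := by
  refine (Finset.card_image_of_injective _ ?_).trans (card_range n)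
  refine (add_right_injective a).comp fun k l h => Nat.cast_injective (R := ℤ) ?_
  exact smul_left_injective ℤ hv (by simpa only [natCast_zsmul] using h)

theorem periodic_of_collinear_lowComplexity_general
    {A : Type*} [Fintype A]
    (η : ℤ × ℤ → A) (hsurj : Function.Surjective η)
    (S : Finset (ℤ × ℤ)) (hSne : S.Nonempty) (hconv : IsLatticeConvex S)
    (hcoll : Collinear ℝ (emb '' (S : Set (ℤ × ℤ))))
    (hcomp : patternCount η S ≤ S.card + Fintype.card A - 2) :
    ∃ h : ℤ × ℤ, h ≠ 0 ∧ ∀ g : ℤ × ℤ, η (g + h) = η g := by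
  obtain ⟨a, v, n, hv, rfl⟩ := hconv.exists_eq_image_range hcoll hSne
  have hn : 0 < n := by simpa [Nat.pos_iff_ne_zero] using hSne
  rw [card_image_range_add_nsmul hv, patternCount_image_range_add_nsmul,
    ← Nat.card_eq_fintype_card] at hcomp
  obtain ⟨m, hm, hle⟩ := exists_lineComplexity_succ_le hsurj hn hcomp
  obtain ⟨N, hN, hper⟩ := exists_periodic_of_lineComplexity_succ_le hle hm
  exact ⟨N • v, smul_ne_zero hN.ne' hv, hper⟩

/-- If `S` is a nonempty finite convex set lying on a line and `P_η(S) ≤ |S| + |A| - 2`,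
then `η` (containing all letters of `A`) is periodic. -/
theorem periodic_of_collinear_lowComplexity
    {A : Type*} [Fintype A] (hA : 2 ≤ Fintype.card A)
    (η : ℤ × ℤ → A) (hsurj : Function.Surjective η)
    (S : Finset (ℤ × ℤ)) (hSne : S.Nonempty) (hconv : IsLatticeConvex S)
    (hcoll : Collinear ℝ (emb '' (S : Set (ℤ × ℤ))))
    (hcomp : patternCount η S ≤ S.card + Fintype.card A - 2) :
    ∃ h : ℤ × ℤ, h ≠ 0 ∧ ∀ g : ℤ × ℤ, η (g + h) = η g :=
  periodic_of_collinear_lowComplexity_general η hsurj S hSne hconv hcoll hcomp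
end

section
/- Let η : ℤ² → A with P_η({g}) = |A| for all g ∈ ℤ² (all letters appear), and suppose P_η(U) ≤ |U| + |A| - 2 for some nonempty finite convex set U ⊂ ℤ². Then there exists a nonempty convex subset S ⊆ U with at least two points that is minimal among convex subsets T ⊆ U satisfying P_η(T) ≤ |T| + |A| - 2, and every such minimal S is an η-generating set: each vertex g of S satisfies P_η(S) = P_η(S \ {g}). -/
/-!
Removing a point from `S` lowers the bound `|S| + |A| - 2` by exactly one, while the pattern
count can only drop. So if `S` is minimal with `P_η(S) ≤ |S| + |A| - 2` and `S \ {g}` is still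
convex, then `S \ {g}` violates the bound, which squeezes `P_η(S \ {g})` up to `P_η(S)`.
Minimal sets exist because `Finset` is well founded under inclusion, and they have at least two
points because a single point already carries `|A|` patterns.
-/

section PatternCount

variable {A : Type*}

lemma patternCount_mono [Finite A] (η : ℤ × ℤ → A) {T S : Finset (ℤ × ℤ)} (h : T ⊆ S) :
    patternCount η T ≤ patternCount η S := by
  let restrict : ((↥S) → A) → ((↥T) → A) := fun w t => w ⟨t, h t.2⟩
  have hsub : {w : (↥T) → A | ∃ u : ℤ × ℤ, ∀ t : ↥T, w t = η (u + (t : ℤ × ℤ))} ⊆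
      restrict '' {w : (↥S) → A | ∃ u : ℤ × ℤ, ∀ s : ↥S, w s = η (u + (s : ℤ × ℤ))} := by
    rintro w ⟨u, hu⟩
    exact ⟨fun s => η (u + (s : ℤ × ℤ)), ⟨u, fun _ => rfl⟩, funext fun t => (hu t).symm⟩
  exact (Set.ncard_le_ncard hsub (Set.toFinite _)).trans (Set.ncard_image_le (Set.toFinite _))

variable [Fintype A] (η : ℤ × ℤ → A)

def IsLowComplexity (S : Finset (ℤ × ℤ)) : Prop :=
  IsLatticeConvex S ∧ S.Nonempty ∧ patternCount η S ≤ S.card + Fintype.card A - 2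

variable {η}

lemma minimal_isLowComplexity_iff {S : Finset (ℤ × ℤ)} :
    Minimal (IsLowComplexity η) S ↔ IsLowComplexity η S ∧
      ∀ T : Finset (ℤ × ℤ), T ⊆ S → IsLatticeConvex T → T.Nonempty →
        patternCount η T ≤ T.card + Fintype.card A - 2 → T = S :=
  minimal_iff.trans <| and_congr_right fun _ =>
    ⟨fun h T hTS hT hTne hTb => (h (y := T) ⟨hT, hTne, hTb⟩ hTS).symm,
      fun h T ⟨hT, hTne, hTb⟩ hTS => (h T hTS hT hTne hTb).symm⟩

lemma IsLowComplexity.two_le_card (hall : ∀ g : ℤ × ℤ, patternCount η {g} = Fintype.card A)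
    {S : Finset (ℤ × ℤ)} (hS : IsLowComplexity η S) : 2 ≤ S.card := by
  obtain ⟨-, ⟨g, hg⟩, hbound⟩ := hS
  have hA : 0 < Fintype.card A := Fintype.card_pos_iff.2 ⟨η 0⟩
  have hsingle : Fintype.card A ≤ patternCount η S :=
    hall g ▸ patternCount_mono η (Finset.singleton_subset_iff.2 hg)
  omega

lemma Minimal.patternCount_erase_eq (hall : ∀ g : ℤ × ℤ, patternCount η {g} = Fintype.card A)
    {S : Finset (ℤ × ℤ)} (hS : Minimal (IsLowComplexity η) S) {g : ℤ × ℤ} (hg : g ∈ S)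
    (hconv : IsLatticeConvex (S.erase g)) : patternCount η S = patternCount η (S.erase g) := by
  have hcard : (S.erase g).card + 1 = S.card := Finset.card_erase_add_one hg
  have hS2 := hS.prop.two_le_card hall
  have hne : (S.erase g).Nonempty := Finset.card_pos.1 (by omega)
  have hviolates : ¬ patternCount η (S.erase g) ≤ (S.erase g).card + Fintype.card A - 2 :=
    fun hb => Finset.notMem_erase g S <|
      (hS.eq_of_le ⟨hconv, hne, hb⟩ (Finset.erase_subset g S)).symm ▸ hg
  have hmono := patternCount_mono η (Finset.erase_subset g S)
  have hbound := hS.prop.2.2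
  omega

end PatternCount

theorem exists_minimal_generating_general
    {A : Type*} [Fintype A]
    (η : ℤ × ℤ → A) (hall : ∀ g : ℤ × ℤ, patternCount η {g} = Fintype.card A)
    (U : Finset (ℤ × ℤ)) (hUne : U.Nonempty) (hUconv : IsLatticeConvex U)
    (hU : patternCount η U ≤ U.card + Fintype.card A - 2) :
    (∃ S : Finset (ℤ × ℤ), S ⊆ U ∧ IsLatticeConvex S ∧ S.Nonempty ∧ 2 ≤ S.card ∧
      patternCount η S ≤ S.card + Fintype.card A - 2 ∧
      (∀ T : Finset (ℤ × ℤ), T ⊆ S → IsLatticeConvex T → T.Nonempty →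
        patternCount η T ≤ T.card + Fintype.card A - 2 → T = S)) ∧
    (∀ S : Finset (ℤ × ℤ), S ⊆ U → IsLatticeConvex S → S.Nonempty →
      patternCount η S ≤ S.card + Fintype.card A - 2 →
      (∀ T : Finset (ℤ × ℤ), T ⊆ S → IsLatticeConvex T → T.Nonempty →
        patternCount η T ≤ T.card + Fintype.card A - 2 → T = S) →
      ∀ g ∈ S, IsLatticeConvex (S.erase g) →
        patternCount η S = patternCount η (S.erase g)) := by
  refine ⟨?_, fun S _ hSconv hSne hSb hmin g hg hconv => ?_⟩
  · obtain ⟨S, hSU, hSmin⟩ :=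
      exists_minimal_le_of_wellFoundedLT (IsLowComplexity η) U ⟨hUconv, hUne, hU⟩
    obtain ⟨hS, hmin⟩ := minimal_isLowComplexity_iff.1 hSmin
    exact ⟨S, hSU, hS.1, hS.2.1, hS.two_le_card hall, hS.2.2, hmin⟩
  · exact (minimal_isLowComplexity_iff.2 ⟨⟨hSconv, hSne, hSb⟩, hmin⟩).patternCount_erase_eq
      hall hg hconv

/-- Existence of minimal low-complexity convex subsets, and every such minimal subset is an
`η`-generating set (each vertex `g`, i.e. a point whose removal leaves a convex set,
satisfies `P_η(S) = P_η(S \ {g})`). -/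
theorem exists_minimal_generating
    {A : Type*} [Fintype A] (hA : 2 ≤ Fintype.card A)
    (η : ℤ × ℤ → A) (hall : ∀ g : ℤ × ℤ, patternCount η {g} = Fintype.card A)
    (U : Finset (ℤ × ℤ)) (hUne : U.Nonempty) (hUconv : IsLatticeConvex U)
    (hU : patternCount η U ≤ U.card + Fintype.card A - 2) :
    (∃ S : Finset (ℤ × ℤ), S ⊆ U ∧ IsLatticeConvex S ∧ S.Nonempty ∧ 2 ≤ S.card ∧
      patternCount η S ≤ S.card + Fintype.card A - 2 ∧
      (∀ T : Finset (ℤ × ℤ), T ⊆ S → IsLatticeConvex T → T.Nonempty →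
        patternCount η T ≤ T.card + Fintype.card A - 2 → T = S)) ∧
    (∀ S : Finset (ℤ × ℤ), S ⊆ U → IsLatticeConvex S → S.Nonempty →
      patternCount η S ≤ S.card + Fintype.card A - 2 →
      (∀ T : Finset (ℤ × ℤ), T ⊆ S → IsLatticeConvex T → T.Nonempty →
        patternCount η T ≤ T.card + Fintype.card A - 2 → T = S) →
      ∀ g ∈ S, IsLatticeConvex (S.erase g) →
        patternCount η S = patternCount η (S.erase g)) :=
  exists_minimal_generating_general η hall U hUne hUconv hU
end

section
/- Let η : ℤ² → A whose range is all of A (|A| ≥ 2), and let S be an mlc η-generating set, i.e., a finite convex set with P_η(S) ≤ (1/2)|S| + |A| - 1 such that every nonempty proper convex subset T ⊊ S satisfies P_η(T) > (1/2)|T| + |A| - 1. Then for every nonempty proper convex subset T ⊊ S, P_η(S) - P_η(T) ≤ ⌈(1/2)|S \ T|⌉ - 1. -/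
theorem Nat.sub_le_ceil_sub_one_of_cast_sub_lt {K : Type*} [Ring K] [LinearOrder K]
    [IsStrictOrderedRing K] [FloorSemiring K] {a b : ℕ} {x : K} (h : (a : K) - b < x) :
    a - b ≤ ⌈x⌉₊ - 1 := by
  rcases le_total a b with hab | hba
  · simp [Nat.sub_eq_zero_of_le hab]
  · have hlt : a - b < ⌈x⌉₊ := Nat.lt_ceil.mpr (by rwa [Nat.cast_sub hba])
    omega

theorem mlc_complexity_difference_general
    {A : Type*} [Fintype A]
    (η : ℤ × ℤ → A)
    (S : Finset (ℤ × ℤ))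
    (hmlc1 : (patternCount η S : ℚ) ≤ (1 / 2) * S.card + Fintype.card A - 1)
    (hmlc2 : ∀ T : Finset (ℤ × ℤ), T ⊆ S → T ≠ S → T.Nonempty → IsLatticeConvex T →
      ((1 : ℚ) / 2) * T.card + Fintype.card A - 1 < patternCount η T)
    (T : Finset (ℤ × ℤ)) (hTS : T ⊆ S) (hTneq : T ≠ S) (hTne : T.Nonempty)
    (hTconv : IsLatticeConvex T) :
    patternCount η S - patternCount η T ≤ ⌈(((S \ T).card : ℚ)) / 2⌉₊ - 1 := by
  apply Nat.sub_le_ceil_sub_one_of_cast_sub_lt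
  have hT := hmlc2 T hTS hTneq hTne hTconv
  rw [Finset.cast_card_sdiff hTS]
  linarith

/-- For an mlc `η`-generating set `S` and any nonempty proper convex subset `T ⊊ S`,
`P_η(S) - P_η(T) ≤ ⌈|S \ T| / 2⌉ - 1`. -/
theorem mlc_complexity_difference
    {A : Type*} [Fintype A] (hA : 2 ≤ Fintype.card A)
    (η : ℤ × ℤ → A) (hsurj : Function.Surjective η)
    (S : Finset (ℤ × ℤ)) (hSne : S.Nonempty) (hSconv : IsLatticeConvex S)
    (hgen : ∀ g ∈ S, IsLatticeConvex (S.erase g) →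
      patternCount η S = patternCount η (S.erase g))
    (hmlc1 : (patternCount η S : ℚ) ≤ (1 / 2) * S.card + Fintype.card A - 1)
    (hmlc2 : ∀ T : Finset (ℤ × ℤ), T ⊆ S → T ≠ S → T.Nonempty → IsLatticeConvex T →
      ((1 : ℚ) / 2) * T.card + Fintype.card A - 1 < patternCount η T)
    (T : Finset (ℤ × ℤ)) (hTS : T ⊆ S) (hTneq : T ≠ S) (hTne : T.Nonempty)
    (hTconv : IsLatticeConvex T) :
    patternCount η S - patternCount η T ≤ ⌈(((S \ T).card : ℚ)) / 2⌉₊ - 1 :=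
  mlc_complexity_difference_general η S hmlc1 hmlc2 T hTS hTneq hTne hTconv
end

section
/- Let ξ : ℤ → A and ξ' : ℤ → A be bi-infinite sequences that are periodic of periods n and n' respectively. If ξ and ξ' agree on n + n' - gcd(n,n') consecutive integers, then ξ = ξ' on the whole common half of agreement extended by periodicity; in particular if both are globally periodic of periods n, n' and agree on an interval of length at least n + n' - gcd(n, n'), then ξ = ξ'. -/
/-! Read the values of `ξ` on the window `[a, a + n + n' - gcd n n')` as a word. It has
period `n` because `ξ` does, and period `n'` because it is also the word of `ξ'`; by the
periodicity lemma for words (`List.HasPeriod.gcd`) it has period `gcd n n'`. Since `gcd n n'`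
divides both periods and the window is at least as long as each of them, the values of `ξ` and
of `ξ'` at `i` both equal the letter of the word at position `(i - a) mod gcd n n'`. -/

section

variable {α : Type*}

def window (f : ℤ → α) (a : ℤ) (L : ℕ) : List α :=
  (List.range L).map fun k : ℕ => f (a + k)

@[simp]
lemma length_window (f : ℤ → α) (a : ℤ) (L : ℕ) : (window f a L).length = L := by
  simp [window]

lemma getElem?_window {f : ℤ → α} {a : ℤ} {L k : ℕ} (hk : k < L) :
    (window f a L)[k]? = some (f (a + k)) := by
  simp only [window, List.getElem?_map, List.getElem?_range hk, Option.map_some]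

lemma window_congr {f f' : ℤ → α} {a : ℤ} {L : ℕ}
    (h : ∀ i : ℤ, a ≤ i → i < a + L → f i = f' i) : window f a L = window f' a L :=
  List.map_congr_left fun k hk =>
    h _ (le_add_of_nonneg_right k.cast_nonneg) (by simpa using List.mem_range.mp hk)

lemma Function.Periodic.hasPeriod_window {f : ℤ → α} {p : ℕ} (hf : Function.Periodic f p)
    (a : ℤ) (L : ℕ) : (window f a L).HasPeriod p := by
  rw [List.hasPeriod_iff_getElem?]
  intro k hk
  rw [length_window] at hk
  rw [getElem?_window (by omega), getElem?_window (by omega), Nat.cast_add, ← add_assoc, hf]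

lemma Function.Periodic.getElem?_window_emod {f : ℤ → α} {p : ℕ} (hf : Function.Periodic f p)
    (hp : 0 < p) {L : ℕ} (hpL : p ≤ L) (a i : ℤ) :
    (window f a L)[((i - a) % p).toNat]? = some (f i) := by
  have hr₀ : 0 ≤ (i - a) % p := Int.emod_nonneg _ (by omega)
  have hrp : (i - a) % p < p := Int.emod_lt_of_pos _ (by omega)
  have hi : a + (i - a) % p = i - ((i - a) / p) • (p : ℤ) := by
    rw [Int.emod_def, smul_eq_mul]; ring
  rw [getElem?_window (by omega), Int.toNat_of_nonneg hr₀, hi, hf.sub_zsmul_eq]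

lemma Function.Periodic.getElem?_window_emod_of_hasPeriod {f : ℤ → α} {p q : ℕ}
    (hf : Function.Periodic f p) (hp : 0 < p) {L : ℕ} (hpL : p ≤ L) {a : ℤ}
    (hw : (window f a L).HasPeriod q) (hqp : q ∣ p) (i : ℤ) :
    (window f a L)[((i - a) % q).toNat]? = some (f i) := by
  have hk : ((i - a) % p).toNat % q = ((i - a) % q).toNat := by
    have hr₀ : 0 ≤ (i - a) % p := Int.emod_nonneg _ (by omega)
    have hq : (q : ℤ) ≠ 0 := by exact_mod_cast (Nat.pos_of_dvd_of_pos hqp hp).ne'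
    zify
    rw [Int.toNat_of_nonneg hr₀, Int.toNat_of_nonneg (Int.emod_nonneg (i - a) hq)]
    exact Int.emod_emod_of_dvd _ (Int.natCast_dvd_natCast.mpr hqp)
  have hlt : ((i - a) % p).toNat < (window f a L).length := by
    have := Int.emod_lt_of_pos (i - a) (by omega : (0 : ℤ) < p)
    rw [length_window]; omega
  rw [← hk, hw.getElem?_mod _ _ _ hlt, hf.getElem?_window_emod hp hpL]

end

/-- Fine–Wilf theorem for bi-infinite sequences: two sequences of periods `n` and `n'`
agreeing on `n + n' - gcd(n, n')` consecutive integers coincide everywhere. -/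
theorem fine_wilf_biinfinite
    {A : Type*} (ξ ξ' : ℤ → A) (n n' : ℕ) (hn : 1 ≤ n) (hn' : 1 ≤ n')
    (hp : ∀ i : ℤ, ξ (i + n) = ξ i) (hp' : ∀ i : ℤ, ξ' (i + n') = ξ' i)
    (a : ℤ)
    (hagree : ∀ i : ℤ, a ≤ i → i < a + (n + n' - Nat.gcd n n' : ℕ) → ξ i = ξ' i) :
    ξ = ξ' := by
  set L := n + n' - Nat.gcd n n'
  have hξ : Function.Periodic ξ n := hp
  have hξ' : Function.Periodic ξ' n' := hp'
  have hwin : window ξ a L = window ξ' a L := window_congr hagree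
  have hgcd : (window ξ a L).HasPeriod (n.gcd n') :=
    (hξ.hasPeriod_window a L).gcd (hwin ▸ hξ'.hasPeriod_window a L) (by simp [L])
  have hnL : n ≤ L := by have := Nat.gcd_le_right n hn'; omega
  have hn'L : n' ≤ L := by have := Nat.gcd_le_left n' hn; omega
  funext i
  apply Option.some_injective
  rw [← hξ.getElem?_window_emod_of_hasPeriod hn hnL hgcd (Nat.gcd_dvd_left n n'),
    ← hξ'.getElem?_window_emod_of_hasPeriod hn' hn'L (hwin ▸ hgcd) (Nat.gcd_dvd_right n n'),
    hwin]
end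

section
/- Let η ∈ A^{ℤ²}, let ℓ ∈ 𝔾₁ be an oriented line through the origin, and suppose there exists a finite convex set S ⊂ ℤ² such that ℓ_S ∩ S = {g₀} is a single point which is η-generated by S (P_η(S) = P_η(S \ {g₀})). Then ℓ is a one-sided expansive direction on X_η: for any x, y ∈ X_η, x|_{H(ℓ)} = y|_{H(ℓ)} implies x = y. -/
/-- Cross product of two lattice vectors; for an oriented line of direction `v`, the
associated half plane `H(ℓ)` consists of the points `g` with `0 ≤ cross v g`. -/
def cross (v g : ℤ × ℤ) : ℤ := v.1 * g.2 - v.2 * g.1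

/-!
Translate `S` so that `g₀` sits at an arbitrary point `g`. Every other point of the translate
lies strictly higher than `g` in the direction transverse to `ℓ`, and since restricting
`S`-patterns to `S \ {g₀}` is injective on the patterns of `η` (there are equally many of
both), agreement of `x` and `y` at all points higher than `g` forces agreement at `g`.
Downward induction on the height, starting from the half plane `H(ℓ)`, gives `x = y`.
-/

lemma cross_add (v a b : ℤ × ℤ) : cross v (a + b) = cross v a + cross v b := by
  simp only [cross, Prod.fst_add, Prod.snd_add]; ring

lemma eq_of_eqOn_nonneg_of_propagate {α β : Type*} (f : α → ℤ) {x y : α → β}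
    (hnonneg : ∀ a, 0 ≤ f a → x a = y a)
    (hstep : ∀ a, (∀ b, f a < f b → x b = y b) → x a = y a) : x = y := by
  have hdepth : ∀ n : ℕ, ∀ a, -(n : ℤ) ≤ f a → x a = y a := by
    intro n
    induction n with
    | zero => simpa using hnonneg
    | succ n ih =>
      exact fun a ha => hstep a fun b hb => ih b (by push_cast at ha; omega)
  funext a
  exact hdepth (-f a).toNat a (by omega)

section Patterns

variable {A : Type*}

def patterns (η : ℤ × ℤ → A) (S : Finset (ℤ × ℤ)) : Set (↥S → A) :=
  {w | ∃ u : ℤ × ℤ, ∀ s : ↥S, w s = η (u + (s : ℤ × ℤ))}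

lemma patternCount_eq_ncard (η : ℤ × ℤ → A) (S : Finset (ℤ × ℤ)) :
    patternCount η S = (patterns η S).ncard := rfl

def restrictPattern {S T : Finset (ℤ × ℤ)} (hTS : T ⊆ S) (w : ↥S → A) : ↥T → A :=
  fun t => w ⟨t, hTS t.2⟩

lemma restrictPattern_image_patterns (η : ℤ × ℤ → A) {S T : Finset (ℤ × ℤ)} (hTS : T ⊆ S) :
    restrictPattern hTS '' patterns η S = patterns η T := by
  ext w
  constructor
  · rintro ⟨w', ⟨u, hu⟩, rfl⟩
    exact ⟨u, fun t => hu _⟩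
  · rintro ⟨u, hu⟩
    exact ⟨fun s => η (u + s), ⟨u, fun _ => rfl⟩, funext fun t => (hu t).symm⟩

lemma restrictPattern_injOn_of_patternCount_eq [Finite A] (η : ℤ × ℤ → A)
    {S T : Finset (ℤ × ℤ)} (hTS : T ⊆ S) (hcount : patternCount η S = patternCount η T) :
    Set.InjOn (restrictPattern hTS) (patterns η S) :=
  Set.injOn_of_ncard_image_eq (by
    rw [restrictPattern_image_patterns, ← patternCount_eq_ncard, ← patternCount_eq_ncard, hcount])

variable [TopologicalSpace A] [DiscreteTopology A]

def orbitClosure (η : ℤ × ℤ → A) : Set (ℤ × ℤ → A) :=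
  closure {y | ∃ u : ℤ × ℤ, y = fun g => η (g + u)}

lemma exists_shift_eqOn_of_mem_orbitClosure {η x : ℤ × ℤ → A} (hx : x ∈ orbitClosure η)
    (F : Finset (ℤ × ℤ)) : ∃ t : ℤ × ℤ, ∀ g ∈ F, x g = η (g + t) := by
  have hopen : IsOpen ((F : Set (ℤ × ℤ)).pi fun g => {x g}) :=
    isOpen_set_pi F.finite_toSet fun g _ => isOpen_discrete _
  obtain ⟨z, hz, u, rfl⟩ := mem_closure_iff.mp hx _ hopen fun g _ => rfl
  exact ⟨u, fun g hg => (hz g hg).symm⟩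

lemma window_mem_patterns {η x : ℤ × ℤ → A} (hx : x ∈ orbitClosure η)
    (S : Finset (ℤ × ℤ)) (u : ℤ × ℤ) : (fun s : ↥S => x (u + s)) ∈ patterns η S := by
  obtain ⟨t, ht⟩ := exists_shift_eqOn_of_mem_orbitClosure hx (S.image (u + ·))
  refine ⟨u + t, fun s => ?_⟩
  change x (u + s) = _
  rw [ht _ (Finset.mem_image_of_mem _ s.2), add_right_comm]

lemma eq_at_of_eqOn_erase_of_patternCount_eq [Finite A] {η x y : ℤ × ℤ → A}
    (hx : x ∈ orbitClosure η) (hy : y ∈ orbitClosure η) {S : Finset (ℤ × ℤ)} {g₀ : ℤ × ℤ}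
    (hg₀ : g₀ ∈ S) (hgen : patternCount η S = patternCount η (S.erase g₀)) (u : ℤ × ℤ)
    (hagree : ∀ s ∈ S.erase g₀, x (u + s) = y (u + s)) : x (u + g₀) = y (u + g₀) := by
  have hwindow := restrictPattern_injOn_of_patternCount_eq η (S.erase_subset g₀) hgen
    (window_mem_patterns hx S u) (window_mem_patterns hy S u)
    (funext fun s => hagree s s.2)
  exact congr_fun hwindow ⟨g₀, hg₀⟩

end Patterns

theorem one_sided_expansive_of_generated_vertex_general
    {A : Type*} [Fintype A] [TopologicalSpace A] [DiscreteTopology A]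
    (η : ℤ × ℤ → A) (v : ℤ × ℤ)
    (S : Finset (ℤ × ℤ))
    (g₀ : ℤ × ℤ) (hg₀ : g₀ ∈ S)
    (hsupp : ∀ s ∈ S, 0 ≤ cross v (s - g₀))
    (hsingle : ∀ s ∈ S, cross v (s - g₀) = 0 → s = g₀)
    (hgen : patternCount η S = patternCount η (S.erase g₀)) :
    ∀ x ∈ closure {y : ℤ × ℤ → A | ∃ u : ℤ × ℤ, y = fun g => η (g + u)},
    ∀ y ∈ closure {y : ℤ × ℤ → A | ∃ u : ℤ × ℤ, y = fun g => η (g + u)},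
      (∀ g : ℤ × ℤ, 0 ≤ cross v g → x g = y g) → x = y := by
  intro x hx y hy hagree
  have hpos : ∀ s ∈ S.erase g₀, 0 < cross v (s - g₀) := fun s hs =>
    (hsupp s (Finset.mem_of_mem_erase hs)).lt_of_ne fun h =>
      Finset.ne_of_mem_erase hs (hsingle s (Finset.mem_of_mem_erase hs) h.symm)
  refine eq_of_eqOn_nonneg_of_propagate (cross v) hagree fun g habove => ?_
  have hstep := eq_at_of_eqOn_erase_of_patternCount_eq hx hy hg₀ hgen (g - g₀) fun s hs => by
    refine habove _ ?_
    rw [sub_add_comm, cross_add]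
    linarith [hpos s hs]
  rwa [sub_add_cancel] at hstep

/-- If some finite convex set `S` has a single point `g₀` on its supporting line in the
direction `v` of `ℓ`, and `g₀` is `η`-generated by `S`, then `ℓ` is a one-sided expansive
direction on `X_η`: two configurations of the orbit closure agreeing on the half plane
`H(ℓ)` are equal. -/
theorem one_sided_expansive_of_generated_vertex
    {A : Type*} [Fintype A] [TopologicalSpace A] [DiscreteTopology A]
    (η : ℤ × ℤ → A) (v : ℤ × ℤ) (hv : v ≠ 0)
    (S : Finset (ℤ × ℤ)) (hconv : IsLatticeConvex S)
    (g₀ : ℤ × ℤ) (hg₀ : g₀ ∈ S)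
    (hsupp : ∀ s ∈ S, 0 ≤ cross v (s - g₀))
    (hsingle : ∀ s ∈ S, cross v (s - g₀) = 0 → s = g₀)
    (hgen : patternCount η S = patternCount η (S.erase g₀)) :
    ∀ x ∈ closure {y : ℤ × ℤ → A | ∃ u : ℤ × ℤ, y = fun g => η (g + u)},
    ∀ y ∈ closure {y : ℤ × ℤ → A | ∃ u : ℤ × ℤ, y = fun g => η (g + u)},
      (∀ g : ℤ × ℤ, 0 ≤ cross v g → x g = y g) → x = y :=
  one_sided_expansive_of_generated_vertex_general η v S g₀ hg₀ hsupp hsingle hgen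
end

section
/- Let the configuration η : ℤ² → {white, black} be defined by η(g) = black if and only if g = (a,a) + b·(Σ_{i=6}^{c} i, 0) for some a ∈ ℤ, b ∈ {-1,0,1}, c ≥ 6, and white otherwise. Then P_η(3,4) = 7 = (1/2)·12 + |A| - 1 where |A| = 2, i.e., the number of distinct 3×4 rectangular patterns appearing in η is exactly 7. -/
section DiagonalConfigurations

def diagonals (S : Finset (ℤ × ℤ)) : Finset ℤ := S.image fun g => g.1 - g.2

def diagonalPattern (S : Finset (ℤ × ℤ)) (m : ℤ) : S → Bool :=
  fun s => decide ((s : ℤ × ℤ).1 - (s : ℤ × ℤ).2 = m)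

variable {S : Finset (ℤ × ℤ)}

lemma sub_mem_diagonals (s : S) : (s : ℤ × ℤ).1 - (s : ℤ × ℤ).2 ∈ diagonals S :=
  Finset.mem_image_of_mem _ s.2

lemma exists_diagonalPattern_eq_true {m : ℤ} (hm : m ∈ diagonals S) :
    ∃ s, diagonalPattern S m s = true := by
  obtain ⟨g, hg, rfl⟩ := Finset.mem_image.mp hm
  exact ⟨⟨g, hg⟩, decide_eq_true rfl⟩

lemma diagonalPattern_injOn : Set.InjOn (diagonalPattern S) (diagonals S) := by
  intro m hm m' _ h
  obtain ⟨s, hs⟩ := exists_diagonalPattern_eq_true hm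
  exact (of_decide_eq_true hs).symm.trans (of_decide_eq_true ((congrFun h s).symm.trans hs))

lemma ncard_insert_blank_diagonalPattern_image :
    (insert (fun _ => false) (diagonalPattern S '' (diagonals S : Set ℤ))).ncard =
      (diagonals S).card + 1 := by
  have hblank : (fun _ => false) ∉ diagonalPattern S '' (diagonals S : Set ℤ) := by
    rintro ⟨m, hm, h⟩
    obtain ⟨s, hs⟩ := exists_diagonalPattern_eq_true hm
    simp [h] at hs
  rw [Set.ncard_insert_of_notMem hblank, diagonalPattern_injOn.ncard_image,
    Set.ncard_coe_finset]

variable {η : ℤ × ℤ → Bool} {D : Set ℤ}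

lemma fst_sub_snd_add (u g : ℤ × ℤ) : (u + g).1 - (u + g).2 = (u.1 - u.2) + (g.1 - g.2) := by
  simp only [Prod.fst_add, Prod.snd_add]
  ring

lemma window_eq_diagonalPattern (hη : ∀ g, η g = true ↔ g.1 - g.2 ∈ D)
    (hsparse : ∀ d, ∀ k ∈ diagonals S, ∀ l ∈ diagonals S,
      d + k ∈ D → d + l ∈ D → k = l)
    {u : ℤ × ℤ} {m : ℤ} (hm : m ∈ diagonals S) (hmD : u.1 - u.2 + m ∈ D) :
    (fun s : S => η (u + s)) = diagonalPattern S m := by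
  funext s
  rw [Bool.eq_iff_iff, hη, fst_sub_snd_add, diagonalPattern, decide_eq_true_iff]
  exact ⟨fun h => hsparse _ _ (sub_mem_diagonals s) _ hm h hmD, fun h => h ▸ hmD⟩

lemma window_eq_blank (hη : ∀ g, η g = true ↔ g.1 - g.2 ∈ D) {u : ℤ × ℤ}
    (hmiss : ∀ k ∈ diagonals S, u.1 - u.2 + k ∉ D) :
    (fun s : S => η (u + s)) = fun _ => false := by
  funext s
  rw [Bool.eq_false_iff, ne_eq, hη, fst_sub_snd_add]
  exact hmiss _ (sub_mem_diagonals s)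

lemma patterns_eq_insert_blank_diagonalPattern_image (hη : ∀ g, η g = true ↔ g.1 - g.2 ∈ D)
    (hsparse : ∀ d, ∀ k ∈ diagonals S, ∀ l ∈ diagonals S,
      d + k ∈ D → d + l ∈ D → k = l)
    (hD : D.Nonempty) (hgap : ∃ d, ∀ k ∈ diagonals S, d + k ∉ D) :
    {w : S → Bool | ∃ u : ℤ × ℤ, ∀ s : S, w s = η (u + s)} =
      insert (fun _ => false) (diagonalPattern S '' (diagonals S : Set ℤ)) := by
  ext w
  simp only [Set.mem_ofPred_eq, Set.mem_insert_iff, Set.mem_image, Finset.mem_coe]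
  constructor
  · rintro ⟨u, hu⟩
    obtain rfl : w = fun s : S => η (u + s) := funext hu
    by_cases hhit : ∃ m ∈ diagonals S, u.1 - u.2 + m ∈ D
    · obtain ⟨m, hm, hmD⟩ := hhit
      exact Or.inr ⟨m, hm, (window_eq_diagonalPattern hη hsparse hm hmD).symm⟩
    · push Not at hhit
      exact Or.inl (window_eq_blank hη hhit)
  · rintro (rfl | ⟨m, hm, rfl⟩)
    · obtain ⟨d, hd⟩ := hgap
      exact ⟨(d, 0), fun s => (congrFun (window_eq_blank hη (by simpa using hd)) s).symm⟩
    · obtain ⟨e, he⟩ := hD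
      exact ⟨(e - m, 0), fun s =>
        (congrFun (window_eq_diagonalPattern hη hsparse hm (by simpa using he)) s).symm⟩

theorem patternCount_eq_card_diagonals_add_one (hη : ∀ g, η g = true ↔ g.1 - g.2 ∈ D)
    (hsparse : ∀ d, ∀ k ∈ diagonals S, ∀ l ∈ diagonals S,
      d + k ∈ D → d + l ∈ D → k = l)
    (hD : D.Nonempty) (hgap : ∃ d, ∀ k ∈ diagonals S, d + k ∉ D) :
    patternCount η S = (diagonals S).card + 1 := by
  rw [patternCount, patterns_eq_insert_blank_diagonalPattern_image hη hsparse hD hgap,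
    ncard_insert_blank_diagonalPattern_image]

end DiagonalConfigurations

lemma diagonals_rectangle :
    diagonals ((Finset.Icc (0 : ℤ) 2) ×ˢ (Finset.Icc (0 : ℤ) 3)) = Finset.Icc (-3) 2 := by
  decide

def sumFromSix (c : ℤ) : ℤ := (c * (c + 1) - 30) / 2

lemma two_mul_sumFromSix (c : ℤ) : 2 * sumFromSix c = c * (c + 1) - 30 := by
  obtain ⟨k, hk⟩ := Int.even_mul_succ_self c
  unfold sumFromSix
  omega

lemma sumFromSix_add_seven_le {c c' : ℤ} (hc : 6 ≤ c) (hcc' : c < c') :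
    sumFromSix c + 7 ≤ sumFromSix c' := by
  have h := two_mul_sumFromSix c
  have h' := two_mul_sumFromSix c'
  have h14 : 1 * 14 ≤ (c' - c) * (c + c' + 1) :=
    mul_le_mul (by omega) (by omega) (by norm_num) (by omega)
  nlinarith

lemma sumFromSix_eq_six_or_thirteen_le {c : ℤ} (hc : 6 ≤ c) :
    sumFromSix c = 6 ∨ 13 ≤ sumFromSix c := by
  rcases hc.eq_or_lt with rfl | h7
  · left; rfl
  · exact Or.inr (sumFromSix_add_seven_le le_rfl h7)

def blackDiagonals : Set ℤ :=
  {x | ∃ b c : ℤ, (b = -1 ∨ b = 0 ∨ b = 1) ∧ 6 ≤ c ∧ x = b * sumFromSix c}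

lemma eq_of_mem_blackDiagonals {x y : ℤ} (hx : x ∈ blackDiagonals) (hy : y ∈ blackDiagonals)
    (hxy : |x - y| ≤ 5) : x = y := by
  obtain ⟨b, c, hb, hc, rfl⟩ := hx
  obtain ⟨b', c', hb', hc', rfl⟩ := hy
  have h := sumFromSix_eq_six_or_thirteen_le hc
  have h' := sumFromSix_eq_six_or_thirteen_le hc'
  have hsep : sumFromSix c = sumFromSix c' ∨ sumFromSix c + 7 ≤ sumFromSix c' ∨
      sumFromSix c' + 7 ≤ sumFromSix c := by
    rcases lt_trichotomy c c' with hlt | rfl | hlt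
    · exact Or.inr (Or.inl (sumFromSix_add_seven_le hc hlt))
    · exact Or.inl rfl
    · exact Or.inr (Or.inr (sumFromSix_add_seven_le hc' hlt))
  rw [abs_le] at hxy
  rcases hb with rfl | rfl | rfl <;> rcases hb' with rfl | rfl | rfl <;> omega

lemma notMem_blackDiagonals {x : ℤ} (h7 : 7 ≤ x) (h12 : x ≤ 12) : x ∉ blackDiagonals := by
  rintro ⟨b, c, hb, hc, rfl⟩
  have h := sumFromSix_eq_six_or_thirteen_le hc
  rcases hb with rfl | rfl | rfl <;> omega

lemma zero_mem_blackDiagonals : (0 : ℤ) ∈ blackDiagonals :=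
  ⟨0, 6, by norm_num, le_rfl, by ring⟩

lemma mem_blackDiagonals_iff {g : ℤ × ℤ} : g.1 - g.2 ∈ blackDiagonals ↔
      ∃ a b c : ℤ, (b = -1 ∨ b = 0 ∨ b = 1) ∧ 6 ≤ c ∧
        g = (a + b * sumFromSix c, a) := by
  constructor
  · rintro ⟨b, c, hb, hc, hg⟩
    exact ⟨g.2, b, c, hb, hc, Prod.ext (by simp only; omega) rfl⟩
  · rintro ⟨a, b, c, hb, hc, rfl⟩
    exact ⟨b, c, hb, hc, by ring⟩

/-- The example configuration of the introduction: `η(g)` is black (`true`) iff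
`g = (a, a) + b·(Σ_{i=6}^c i, 0)` with `a ∈ ℤ`, `b ∈ {-1,0,1}`, `c ≥ 6`; it satisfies
`P_η(3,4) = 7 = (1/2)·12 + |A| - 1` with `|A| = 2`. -/
theorem example_configuration_complexity
    (η : ℤ × ℤ → Bool)
    (hη : ∀ g : ℤ × ℤ, η g = true ↔
      ∃ a b c : ℤ, (b = -1 ∨ b = 0 ∨ b = 1) ∧ 6 ≤ c ∧
        g = (a + b * ((c * (c + 1) - 30) / 2), a)) :
    patternCount η ((Finset.Icc (0 : ℤ) 2) ×ˢ (Finset.Icc (0 : ℤ) 3)) = 7 := by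
  have hblack : ∀ g, η g = true ↔ g.1 - g.2 ∈ blackDiagonals :=
    fun g => (hη g).trans mem_blackDiagonals_iff.symm
  rw [patternCount_eq_card_diagonals_add_one hblack ?sparse ⟨0, zero_mem_blackDiagonals⟩
    ⟨10, ?gap⟩, diagonals_rectangle]
  · rfl
  case sparse =>
    intro d k hk l hl hkD hlD
    rw [diagonals_rectangle, Finset.mem_Icc] at hk hl
    have := eq_of_mem_blackDiagonals hkD hlD (abs_le.mpr ⟨by omega, by omega⟩)
    omega
  case gap =>
    intro k hk
    rw [diagonals_rectangle, Finset.mem_Icc] at hk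
    exact notMem_blackDiagonals (by omega) (by omega)
end

section
/- Let U ⊂ ℤ² be a finite convex set whose convex hull has positive area, and let ϖ, ϖ' be two antiparallel edges of U with |ϖ ∩ U| ≤ |ϖ' ∩ U|. Then for any line ℓ parallel to ϖ that intersects conv(U) and contains at least one lattice point, |ℓ ∩ U| ≥ |ϖ ∩ U| - 1. -/
/-!
Split `v = d • w` with `w` primitive. The lattice points of `U` on the edge `ϖ` (level `0` of
`s ↦ cross v (s - g₀)`) and on `ϖ'` (the top level `M`) span runs `p, p + w, …, p + K • w`
with `K ≥ |ϖ ∩ U| - 1`. If `ℓ` sits at level `c ∈ [0, M]`, the convex combination with weights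
`1 - c/M, c/M` of the two edges is a chord of `conv(U)` on `ℓ` whose length, in units of `w`,
is again at least `|ϖ ∩ U| - 1`; such a chord contains that many points `q + k • w`, all of
which lie in `U` by lattice convexity.
-/

open Finset Set

theorem eq_smul_of_mul_sub_mul_eq_zero {R : Type*} [CommRing R] {w u : R × R} {A B : R}
    (hAB : A * w.1 + B * w.2 = 1) (h : w.1 * u.2 - w.2 * u.1 = 0) :
    u = (A * u.1 + B * u.2) • w := by
  ext <;> simp only [Prod.smul_fst, Prod.smul_snd, smul_eq_mul]
  · linear_combination (-u.1) * hAB - B * h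
  · linear_combination (-u.2) * hAB + A * h

theorem exists_eq_smul_of_mul_sub_mul_eq_zero {w u : ℝ × ℝ} (hw : w ≠ 0)
    (h : w.1 * u.2 - w.2 * u.1 = 0) : ∃ σ : ℝ, u = σ • w := by
  have hn : w.1 ^ 2 + w.2 ^ 2 ≠ 0 := by
    contrapose! hw
    ext <;> simp only [Prod.fst_zero, Prod.snd_zero] <;> nlinarith [sq_nonneg w.1, sq_nonneg w.2]
  exact ⟨_, eq_smul_of_mul_sub_mul_eq_zero (A := w.1 / (w.1 ^ 2 + w.2 ^ 2))
    (B := w.2 / (w.1 ^ 2 + w.2 ^ 2)) (by field_simp) h⟩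

theorem cross_neg_left (v u : ℤ × ℤ) : cross (-v) u = -cross v u := by
  simp only [cross, Prod.fst_neg, Prod.snd_neg]; ring

theorem cross_smul_left (d : ℤ) (v u : ℤ × ℤ) : cross (d • v) u = d * cross v u := by
  simp only [cross, Prod.smul_fst, Prod.smul_snd, smul_eq_mul]; ring

theorem cross_smul_right (d : ℤ) (v u : ℤ × ℤ) : cross v (d • u) = d * cross v u := by
  simp only [cross, Prod.smul_fst, Prod.smul_snd, smul_eq_mul]; ring

theorem exists_eq_zsmul_isCoprime {v : ℤ × ℤ} (hv : v ≠ 0) :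
    ∃ d : ℤ, ∃ w : ℤ × ℤ, d ≠ 0 ∧ v = d • w ∧ IsCoprime w.1 w.2 := by
  have hpos : 0 < Int.gcd v.1 v.2 := Int.gcd_pos_iff.2 <| by
    contrapose! hv; exact Prod.ext hv.1 hv.2
  obtain ⟨a, b, hab, ha, hb⟩ := Int.exists_gcd_one hpos
  refine ⟨Int.gcd v.1 v.2, (a, b), by exact_mod_cast hpos.ne', ?_,
    Int.isCoprime_iff_gcd_eq_one.2 hab⟩
  ext <;> simp only [Prod.smul_fst, Prod.smul_snd, smul_eq_mul] <;> linarith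

theorem exists_add_zsmul_mem_of_cross_eq_zero {w g : ℤ × ℤ} (hw : IsCoprime w.1 w.2)
    {E : Finset (ℤ × ℤ)} (hne : E.Nonempty) (hE : ∀ s ∈ E, cross w (s - g) = 0) :
    ∃ p ∈ E, ∃ K : ℤ, p + K • w ∈ E ∧ (#E : ℤ) ≤ K + 1 := by
  obtain ⟨A, B, hAB⟩ := hw
  -- the Bézout coefficients `A, B` read off the coordinate of `s - g` along `w`
  set κ : ℤ × ℤ → ℤ := fun s => A * (s - g).1 + B * (s - g).2
  have hκ : ∀ s ∈ E, s = g + κ s • w := fun s hs =>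
    sub_eq_iff_eq_add'.1 (eq_smul_of_mul_sub_mul_eq_zero hAB (hE s hs))
  obtain ⟨p, hp, hpmin⟩ := E.exists_min_image κ hne
  obtain ⟨p', hp', hpmax⟩ := E.exists_max_image κ hne
  refine ⟨p, hp, κ p' - κ p, ?_, ?_⟩
  · have hpp' : p' - p = (κ p' - κ p) • w := by
      conv_lhs => rw [hκ p' hp', hκ p hp]
      rw [sub_smul]; abel
    rwa [← hpp', add_sub_cancel]
  · have hinj : InjOn κ E := fun s hs t ht hst => by rw [hκ s hs, hκ t ht, hst]
    have hsub : E.image κ ⊆ Icc (κ p) (κ p') := fun k hk => by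
      obtain ⟨s, hs, rfl⟩ := mem_image.1 hk
      exact mem_Icc.2 ⟨hpmin s hs, hpmax s hs⟩
    have hcard := Finset.card_le_card hsub
    rw [card_image_of_injOn hinj, Int.card_Icc] at hcard
    have := hpmin p' hp'
    omega

theorem emb_add (s t : ℤ × ℤ) : emb (s + t) = emb s + emb t := by
  ext <;> simp [emb]

theorem emb_sub (s t : ℤ × ℤ) : emb (s - t) = emb s - emb t := by
  ext <;> simp [emb]

theorem emb_zsmul (k : ℤ) (s : ℤ × ℤ) : emb (k • s) = (k : ℝ) • emb s := by
  ext <;> simp [emb]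

def crossₗ (v : ℤ × ℤ) : ℝ × ℝ →ₗ[ℝ] ℝ :=
  (v.1 : ℝ) • LinearMap.snd ℝ ℝ ℝ - (v.2 : ℝ) • LinearMap.fst ℝ ℝ ℝ

theorem crossₗ_apply (v : ℤ × ℤ) (x : ℝ × ℝ) : crossₗ v x = v.1 * x.2 - v.2 * x.1 := rfl

theorem crossₗ_emb (v s : ℤ × ℤ) : crossₗ v (emb s) = cross v s := by
  simp [crossₗ_apply, emb, cross]

theorem crossₗ_emb_sub (v s t : ℤ × ℤ) :
    crossₗ v (emb s) - crossₗ v (emb t) = cross v (s - t) := by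
  rw [← map_sub, ← emb_sub, crossₗ_emb]

theorem crossₗ_add_smul_emb_self (v : ℤ × ℤ) (x : ℝ × ℝ) (t : ℝ) :
    crossₗ v (x + t • emb v) = crossₗ v x := by
  simp only [crossₗ_apply, emb, Prod.fst_add, Prod.snd_add, Prod.smul_fst, Prod.smul_snd,
    smul_eq_mul]
  ring

theorem exists_eq_add_smul_of_crossₗ_eq {v : ℤ × ℤ} (hv : v ≠ 0) {x y : ℝ × ℝ}
    (h : crossₗ v x = crossₗ v y) : ∃ σ : ℝ, x = y + σ • emb v := by
  have hv' : emb v ≠ 0 := fun h0 => hv (by simpa [emb, Prod.ext_iff] using h0)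
  obtain ⟨σ, hσ⟩ := exists_eq_smul_of_mul_sub_mul_eq_zero (u := x - y) hv' <| by
    rw [crossₗ_apply, crossₗ_apply] at h
    simp only [emb, Prod.fst_sub, Prod.snd_sub]
    linarith
  exact ⟨σ, eq_add_of_sub_eq' hσ⟩

theorem crossₗ_mem_Icc_of_mem_convexHull {U : Finset (ℤ × ℤ)} {v g₀ g₁ : ℤ × ℤ}
    (h₀ : ∀ s ∈ U, 0 ≤ cross v (s - g₀)) (h₁ : ∀ s ∈ U, 0 ≤ cross (-v) (s - g₁)) {x : ℝ × ℝ}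
    (hx : x ∈ convexHull ℝ (emb '' (U : Set (ℤ × ℤ)))) :
    crossₗ v x ∈ Icc (crossₗ v (emb g₀)) (crossₗ v (emb g₁)) := by
  refine convexHull_min ?_ ((convex_Icc _ _).linear_preimage (crossₗ v)) hx
  rintro _ ⟨s, hs, rfl⟩
  have h₁s := h₁ s hs
  rw [cross_neg_left, neg_nonneg] at h₁s
  constructor
  · rw [← sub_nonneg, crossₗ_emb_sub]; exact_mod_cast h₀ s hs
  · rw [← sub_nonpos, crossₗ_emb_sub]; exact_mod_cast h₁s

theorem exists_add_zsmul_mem_card_filter_cross_le {U : Finset (ℤ × ℤ)} {d : ℤ} {w g : ℤ × ℤ}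
    (hd : d ≠ 0) (hw : IsCoprime w.1 w.2) (hg : g ∈ U) :
    ∃ p ∈ U, ∃ K : ℤ, p + K • w ∈ U ∧ crossₗ (d • w) (emb p) = crossₗ (d • w) (emb g) ∧
      (#(U.filter fun s => cross (d • w) (s - g) = 0) : ℤ) ≤ K + 1 := by
  obtain ⟨p, hp, K, hpK, hcard⟩ := exists_add_zsmul_mem_of_cross_eq_zero (g := g) hw
    ⟨g, mem_filter.2 ⟨hg, by simp [cross]⟩⟩ fun s hs =>
      (mul_eq_zero.1 (cross_smul_left d w _ ▸ (mem_filter.1 hs).2)).resolve_left hd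
  refine ⟨p, (mem_filter.1 hp).1, K, (mem_filter.1 hpK).1, ?_, hcard⟩
  rw [← sub_eq_zero, crossₗ_emb_sub, (mem_filter.1 hp).2, Int.cast_zero]

theorem Convex.exists_add_smul_mem_of_mem_Icc {E : Type*} [AddCommGroup E] [Module ℝ E]
    {C : Set E} (hC : Convex ℝ C) (F : E →ₗ[ℝ] ℝ) {a b u : E} {K₀ K₁ r c : ℝ}
    (ha : a ∈ C) (ha' : a + K₀ • u ∈ C) (hb : b ∈ C) (hb' : b + K₁ • u ∈ C)
    (hK₀ : r ≤ K₀) (hK₁ : r ≤ K₁) (hc : c ∈ Icc (F a) (F b)) :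
    ∃ P : E, ∃ τ : ℝ, P ∈ C ∧ P + τ • u ∈ C ∧ F P = c ∧ r ≤ τ := by
  obtain ⟨α, β, hα, hβ, hαβ, rfl⟩ := Icc_subset_segment hc
  refine ⟨α • a + β • b, α * K₀ + β * K₁, hC ha hb hα hβ hαβ, ?_, by simp, ?_⟩
  · convert hC ha' hb' hα hβ hαβ using 1
    module
  · calc r = α * r + β * r := by rw [← add_mul, hαβ, one_mul]
      _ ≤ α * K₀ + β * K₁ := by gcongr

theorem IsLatticeConvex.add_zsmul_mem_s18 {U : Finset (ℤ × ℤ)} (hU : IsLatticeConvex U)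
    {q w : ℤ × ℤ} {σ ρ : ℝ} (hσ : emb q + σ • emb w ∈ convexHull ℝ (emb '' (U : Set (ℤ × ℤ))))
    (hρ : emb q + ρ • emb w ∈ convexHull ℝ (emb '' (U : Set (ℤ × ℤ)))) {k : ℤ}
    (hk : (k : ℝ) ∈ Icc σ ρ) : q + k • w ∈ U := by
  apply hU
  obtain ⟨α, β, hα, hβ, hαβ, hk⟩ := Icc_subset_segment hk
  obtain rfl : β = 1 - α := by linarith
  convert (convex_convexHull ℝ _) hσ hρ hα hβ hαβ using 1
  rw [emb_add, emb_zsmul, ← hk, smul_eq_mul, smul_eq_mul]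
  module

theorem le_card_Icc_ceil_floor {σ ρ : ℝ} {n : ℤ} (h : (n : ℝ) ≤ ρ - σ) :
    n ≤ #(Icc ⌈σ⌉ ⌊ρ⌋) := by
  have hfloor := Int.sub_one_lt_floor ρ
  have hceil := Int.ceil_lt_add_one σ
  suffices n - 1 < ⌊ρ⌋ + 1 - ⌈σ⌉ by
    rw [Int.card_Icc]; have := Int.self_le_toNat (⌊ρ⌋ + 1 - ⌈σ⌉); omega
  exact_mod_cast (by push_cast; linarith : ((n - 1 : ℤ) : ℝ) < ((⌊ρ⌋ + 1 - ⌈σ⌉ : ℤ) : ℝ))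

theorem card_Icc_ceil_floor_le_card_filter_cross {U : Finset (ℤ × ℤ)} (hU : IsLatticeConvex U)
    {q v w : ℤ × ℤ} (hw : w ≠ 0) (hvw : cross v w = 0) {σ ρ : ℝ}
    (hσ : emb q + σ • emb w ∈ convexHull ℝ (emb '' (U : Set (ℤ × ℤ))))
    (hρ : emb q + ρ • emb w ∈ convexHull ℝ (emb '' (U : Set (ℤ × ℤ)))) :
    #(Icc ⌈σ⌉ ⌊ρ⌋) ≤ #(U.filter fun s => cross v (s - q) = 0) := by
  refine card_le_card_of_injOn (fun k => q + k • w) (fun k hk => ?_)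
    ((add_right_injective q).comp (smul_left_injective ℤ hw)).injOn
  obtain ⟨hσk, hkρ⟩ := Finset.mem_Icc.1 hk
  refine mem_filter.2 ⟨hU.add_zsmul_mem_s18 hσ hρ ⟨Int.ceil_le.1 hσk, Int.le_floor.1 hkρ⟩, ?_⟩
  rw [add_sub_cancel_left, cross_smul_right, hvw, mul_zero]

theorem parallel_line_card_ge_general
    (U : Finset (ℤ × ℤ)) (hUconv : IsLatticeConvex U)
    (v : ℤ × ℤ) (hv : v ≠ 0)
    (g₀ g₁ : ℤ × ℤ) (hg₀ : g₀ ∈ U) (hg₁ : g₁ ∈ U)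
    (hsupp₀ : ∀ s ∈ U, 0 ≤ cross v (s - g₀))
    (hsupp₁ : ∀ s ∈ U, 0 ≤ cross (-v) (s - g₁))
    (hle : (U.filter fun s => cross v (s - g₀) = 0).card ≤
      (U.filter fun s => cross (-v) (s - g₁) = 0).card)
    (q : ℤ × ℤ)
    (hmeet : ∃ t : ℝ, emb q + t • emb v ∈ convexHull ℝ (emb '' (U : Set (ℤ × ℤ)))) :
    (U.filter fun s => cross v (s - g₀) = 0).card - 1 ≤
      (U.filter fun s => cross v (s - q) = 0).card := by
  obtain ⟨t, ht⟩ := hmeet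
  have hFq := crossₗ_mem_Icc_of_mem_convexHull hsupp₀ hsupp₁ ht
  rw [crossₗ_add_smul_emb_self] at hFq
  obtain ⟨d, w, hd, rfl, hw⟩ := exists_eq_zsmul_isCoprime hv
  simp only [cross_neg_left, neg_eq_zero] at hle
  set m := #(U.filter fun s => cross (d • w) (s - g₀) = 0)
  obtain ⟨p₀, hp₀, K₀, hK₀, hFp₀, hcard₀⟩ := exists_add_zsmul_mem_card_filter_cross_le hd hw hg₀
  obtain ⟨p₁, hp₁, K₁, hK₁, hFp₁, hcard₁⟩ := exists_add_zsmul_mem_card_filter_cross_le hd hw hg₁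
  have hemb : ∀ s ∈ U, emb s ∈ convexHull ℝ (emb '' (U : Set (ℤ × ℤ))) := fun s hs =>
    subset_convexHull ℝ _ (mem_image_of_mem emb hs)
  obtain ⟨P, τ, hP, hPτ, hFP, hτ⟩ := (convex_convexHull ℝ _).exists_add_smul_mem_of_mem_Icc _
    (hemb _ hp₀) (by simpa only [emb_add, emb_zsmul] using hemb _ hK₀)
    (hemb _ hp₁) (by simpa only [emb_add, emb_zsmul] using hemb _ hK₁)
    (r := ((m - 1 : ℤ) : ℝ))
    (Int.cast_le.2 (by omega)) (Int.cast_le.2 (by omega)) (hFp₀ ▸ hFp₁ ▸ hFq)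
  obtain ⟨σ, rfl⟩ := exists_eq_add_smul_of_crossₗ_eq hv hFP
  rw [emb_zsmul, smul_smul] at hP hPτ
  rw [add_assoc, ← add_smul] at hPτ
  have hcount := card_Icc_ceil_floor_le_card_filter_cross (v := d • w) hUconv
    (by rintro rfl; simp at hv) (by rw [cross_smul_left]; simp only [cross]; ring) hP hPτ
  have := le_card_Icc_ceil_floor (n := m - 1) (σ := σ * d) (ρ := σ * d + τ) (by linarith)
  omega

/-- If `ϖ, ϖ'` are antiparallel edges of a finite convex set `U` with
`|ϖ ∩ U| ≤ |ϖ' ∩ U|`, then every line parallel to `ϖ` through a lattice point `q` that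
meets `conv(U)` satisfies `|ℓ ∩ U| ≥ |ϖ ∩ U| - 1`. -/
theorem parallel_line_card_ge
    (U : Finset (ℤ × ℤ)) (hUconv : IsLatticeConvex U)
    (harea : ¬ Collinear ℝ (emb '' (U : Set (ℤ × ℤ))))
    (v : ℤ × ℤ) (hv : v ≠ 0)
    (g₀ g₁ : ℤ × ℤ) (hg₀ : g₀ ∈ U) (hg₁ : g₁ ∈ U)
    (hsupp₀ : ∀ s ∈ U, 0 ≤ cross v (s - g₀))
    (hsupp₁ : ∀ s ∈ U, 0 ≤ cross (-v) (s - g₁))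
    (hedge₀ : 2 ≤ (U.filter fun s => cross v (s - g₀) = 0).card)
    (hedge₁ : 2 ≤ (U.filter fun s => cross (-v) (s - g₁) = 0).card)
    (hle : (U.filter fun s => cross v (s - g₀) = 0).card ≤
      (U.filter fun s => cross (-v) (s - g₁) = 0).card)
    (q : ℤ × ℤ)
    (hmeet : ∃ t : ℝ, emb q + t • emb v ∈ convexHull ℝ (emb '' (U : Set (ℤ × ℤ)))) :
    (U.filter fun s => cross v (s - g₀) = 0).card - 1 ≤
      (U.filter fun s => cross v (s - q) = 0).card :=
  parallel_line_card_ge_general U hUconv v hv g₀ g₁ hg₀ hg₁ hsupp₀ hsupp₁ hle q hmeet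
end
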